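/- arXiv:1307.2457 — 3 statements merged into one kernel-verified Lean document; each statement's English description precedes it below -/
import Mathlib

section
/- If u and v are vectors in ℝ³ with ‖u‖ = ‖v‖ and R is any rotation of ℝ³ with R(v) = u, then the rotation angle of R is at least the angle between u and v. That is, the rotation taking v to u within the plane spanned by u and v has the smallest possible rotation angle among all rotations mapping v to u. -/
/-!
Write `c = cos θ` and `t = tr R = 1 + 2c`. For `R ∈ SO(3)` the adjugate is `Rᵀ`, so the
Cayley–Hamilton theorem gives `R² = Rᵀ + tR - t`. Hence the symmetric matrix
`N = R + Rᵀ - 2c` satisfies `N² = (2 - 2c) N`: it is `2 - 2c` times the orthogonal projection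
onto the rotation axis, in particular positive semidefinite. Its quadratic form at `v` gives
`⟪Rv, v⟫ ≥ c ‖v‖²`, i.e. `cos ∠(u, v) ≥ cos θ`, and `cos` is decreasing on `[0, π]`.
-/

open InnerProductGeometry

open Matrix

namespace Matrix

variable {K : Type*}

/-- Cayley–Hamilton for `3 × 3` matrices in adjugate form, doubled so that it holds over any
commutative ring. -/
theorem two_smul_adjugate_fin_three [CommRing K] (A : Matrix (Fin 3) (Fin 3) K) :
    (2 : K) • A.adjugate = (2 : K) • (A * A) - (2 * A.trace) • A
      + (A.trace ^ 2 - (A * A).trace) • (1 : Matrix (Fin 3) (Fin 3) K) := by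
  ext i j
  fin_cases i <;> fin_cases j <;>
    simp [adjugate_fin_three, trace_fin_three, mul_apply, Fin.sum_univ_three] <;> ring

theorem adjugate_eq_transpose_of_mem_specialOrthogonalGroup {n : Type*} [Fintype n]
    [DecidableEq n] [CommRing K] {R : Matrix n n K} (hR : R ∈ specialOrthogonalGroup n K) :
    R.adjugate = Rᵀ := by
  rw [mem_specialOrthogonalGroup_iff, mem_orthogonalGroup_iff'] at hR
  exact (left_inv_eq_right_inv hR.1 (by rw [mul_adjugate, hR.2, one_smul])).symm

theorem trace_mul_self_of_mem_specialOrthogonalGroup_fin_three [CommRing K]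
    {R : Matrix (Fin 3) (Fin 3) K} (hR : R ∈ specialOrthogonalGroup (Fin 3) K) :
    (R * R).trace = R.trace ^ 2 - 2 * R.trace := by
  have h := congrArg trace (two_smul_adjugate_fin_three R)
  simp only [adjugate_eq_transpose_of_mem_specialOrthogonalGroup hR, trace_smul, trace_add,
    trace_sub, trace_transpose, trace_one, Fintype.card_fin, smul_eq_mul] at h
  linear_combination h

theorem mul_self_of_mem_specialOrthogonalGroup_fin_three [Field K] [NeZero (2 : K)]
    {R : Matrix (Fin 3) (Fin 3) K} (hR : R ∈ specialOrthogonalGroup (Fin 3) K) :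
    R * R = Rᵀ + R.trace • R - R.trace • (1 : Matrix (Fin 3) (Fin 3) K) := by
  have h := two_smul_adjugate_fin_three R
  rw [adjugate_eq_transpose_of_mem_specialOrthogonalGroup hR,
    trace_mul_self_of_mem_specialOrthogonalGroup_fin_three hR] at h
  refine smul_right_injective _ (two_ne_zero (α := K)) ?_
  linear_combination (norm := module) -h

theorem mul_self_add_transpose_sub_smul_one [Field K] [NeZero (2 : K)]
    {R : Matrix (Fin 3) (Fin 3) K} (hR : R ∈ specialOrthogonalGroup (Fin 3) K) {c : K}
    (htrace : R.trace = 1 + 2 * c) :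
    (R + Rᵀ - (2 * c) • 1) * (R + Rᵀ - (2 * c) • 1) = (2 - 2 * c) • (R + Rᵀ - (2 * c) • 1) := by
  have hsq := mul_self_of_mem_specialOrthogonalGroup_fin_three hR
  have hsqT : Rᵀ * Rᵀ = R + R.trace • Rᵀ - R.trace • (1 : Matrix (Fin 3) (Fin 3) K) := by
    simpa [transpose_mul] using congrArg transpose hsq
  obtain ⟨hRRT, hRTR⟩ : R * Rᵀ = 1 ∧ Rᵀ * R = 1 :=
    ⟨(mem_orthogonalGroup_iff _ _).mp hR.1, (mem_orthogonalGroup_iff' _ _).mp hR.1⟩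
  simp only [sub_mul, add_mul, mul_sub, mul_add, Matrix.smul_mul, Matrix.mul_smul, one_mul,
    mul_one, smul_smul]
  rw [hsq, hsqT, hRRT, hRTR, htrace]
  module

theorem posSemidef_of_mul_self_eq_smul {n : Type*} [Fintype n] {N : Matrix n n ℝ}
    (hN : N.IsHermitian) {a : ℝ} (ha : 0 ≤ a) (h : N * N = a • N) : N.PosSemidef := by
  rcases ha.eq_or_lt with rfl | ha
  · have : N = 0 := conjTranspose_mul_self_eq_zero.mp (by rw [hN.eq, h, zero_smul])
    exact this ▸ .zero
  · have : N = a⁻¹ • (Nᴴ * N) := by rw [hN.eq, h, smul_smul, inv_mul_cancel₀ ha.ne', one_smul]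
    exact this ▸ (posSemidef_conjTranspose_mul_self N).smul (inv_nonneg.mpr ha.le)

theorem cos_mul_dotProduct_self_le_dotProduct_mulVec {R : Matrix (Fin 3) (Fin 3) ℝ}
    (hR : R ∈ specialOrthogonalGroup (Fin 3) ℝ) {θ : ℝ} (htrace : R.trace = 1 + 2 * Real.cos θ)
    (v : Fin 3 → ℝ) : Real.cos θ * (v ⬝ᵥ v) ≤ v ⬝ᵥ (R *ᵥ v) := by
  have hsymm : (R + Rᵀ - (2 * Real.cos θ) • 1).IsHermitian := by
    simp only [IsHermitian, conjTranspose_eq_transpose_of_trivial, transpose_sub, transpose_add,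
      transpose_transpose, transpose_smul, transpose_one, add_comm]
  have hpsd := posSemidef_of_mul_self_eq_smul hsymm (by linarith [Real.cos_le_one θ])
    (mul_self_add_transpose_sub_smul_one hR htrace)
  have hquad := hpsd.dotProduct_mulVec_nonneg v
  have htranspose : v ⬝ᵥ (Rᵀ *ᵥ v) = v ⬝ᵥ (R *ᵥ v) := by
    rw [mulVec_transpose, dotProduct_mulVec, dotProduct_comm]
  simp only [star_trivial, add_mulVec, sub_mulVec, smul_mulVec, one_mulVec, dotProduct_add,
    dotProduct_sub, dotProduct_smul, smul_eq_mul, htranspose] at hquad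
  linarith

end Matrix

theorem stmt_1_general (R : Matrix (Fin 3) (Fin 3) ℝ)
    (hR : R ∈ Matrix.orthogonalGroup (Fin 3) ℝ) (hdet : R.det = 1)
    (u v : EuclideanSpace ℝ (Fin 3)) (hv0 : v ≠ 0)
    (hnorm : ‖u‖ = ‖v‖)
    (huv : ∀ i, u i = ∑ j, R i j * v j)
    (θ : ℝ) (hθ : θ ∈ Set.Icc 0 Real.pi)
    (htrace : R.trace = 1 + 2 * Real.cos θ) :
    angle u v ≤ θ := by
  have hu : u = WithLp.toLp 2 (R *ᵥ WithLp.ofLp v) := by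
    ext i
    exact huv i
  have hkey := cos_mul_dotProduct_self_le_dotProduct_mulVec
    (mem_specialOrthogonalGroup_iff.mpr ⟨hR, hdet⟩) htrace (WithLp.ofLp v)
  have hcos : Real.cos θ ≤ Real.cos (angle u v) := by
    rw [cos_angle, hnorm, le_div_iff₀ (by positivity), ← real_inner_self_eq_norm_mul_norm,
      EuclideanSpace.inner_eq_star_dotProduct, EuclideanSpace.inner_eq_star_dotProduct, hu]
    simpa using hkey
  exact (Real.strictAntiOn_cos.le_iff_ge hθ ⟨angle_nonneg u v, angle_le_pi u v⟩).mp hcos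

/-- If u, v ∈ ℝ³ are nonzero with ‖u‖ = ‖v‖ and R ∈ SO(3) maps v to u, then
the rotation angle θ ∈ [0,π] of R (characterized by trace R = 1 + 2 cos θ)
is at least the angle between u and v. -/
theorem stmt_1 (R : Matrix (Fin 3) (Fin 3) ℝ)
    (hR : R ∈ Matrix.orthogonalGroup (Fin 3) ℝ) (hdet : R.det = 1)
    (u v : EuclideanSpace ℝ (Fin 3)) (hu0 : u ≠ 0) (hv0 : v ≠ 0)
    (hnorm : ‖u‖ = ‖v‖)
    (huv : ∀ i, u i = ∑ j, R i j * v j)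
    (θ : ℝ) (hθ : θ ∈ Set.Icc 0 Real.pi)
    (htrace : R.trace = 1 + 2 * Real.cos θ) :
    angle u v ≤ θ :=
  stmt_1_general R hR hdet u v hv0 hnorm huv θ hθ htrace
end

section
/- Let v ∈ L²(ℝᵐ, ℝ³) be a nonzero square-integrable vector field with ‖v‖_{L²} = 1, and let u = R_{P,α}(v) be its copy under an outer rotation by angle α ∈ [0, π) in the plane of a unit bivector P. Let e^{φQ} = (u ⋆ v)(0) be the (normalized) geometric cross correlation at the origin, written in polar form with unit bivector Q and φ ∈ [0, π]. Then the composed rotation exp(αP/2)·exp(φQ/2) has rotation angle β satisfying β ≤ α. -/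
/-!
Write `p = cos(α/2) + sin(α/2) P` for the rotor, so that `u = p̄ v p` pointwise. Then
`p · (u ⋆ v)(0) = ∫ v̄ p v`, whose scalar part is `Re p · ∫ ‖v‖² = cos(α/2)`, while
`N := ‖(u ⋆ v)(0)‖ ≤ ∫ ‖v‖² = 1`. Writing `X = Re(p e^{φQ/2})`, the double-angle formulas turn
`cos(α/2) = N · Re(p e^{φQ})` into `2 N cos(φ/2) X = (1 + N) cos(α/2) ≥ 2 N cos(α/2)`, so
`cos(α/2) ≤ X`, and `arccos` is antitone.
-/

open MeasureTheory Quaternion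

namespace Quaternion

variable {R : Type*} [CommRing R]

theorem re_mul_comm (a b : ℍ[R]) : (a * b).re = (b * a).re := by
  simp only [re_mul]; ring

theorem re_mul_coe_add_smul (p Q : ℍ[R]) (c s : R) :
    (p * ((c : ℍ[R]) + s • Q)).re = c * p.re + s * (p * Q).re := by
  simp only [mul_add, re_add, mul_coe_eq_smul, mul_smul_comm, re_smul, smul_eq_mul]

theorem normSq_coe_add_smul (c s : R) {P : ℍ[R]} (hP : P.re = 0) :
    normSq ((c : ℍ[R]) + s • P) = c ^ 2 + s ^ 2 * normSq P := by
  simp only [normSq_def', re_add, re_coe, re_smul, imI_add, imI_coe, imI_smul, imJ_add,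
    imJ_coe, imJ_smul, imK_add, imK_coe, imK_smul, smul_eq_mul, hP]
  ring

theorem re_mul_star_conj_mul (p w : ℍ[R]) :
    (p * (star (star p * w * p) * w)).re = normSq p * p.re * normSq w := by
  have hconj : p * (star (star p * w * p) * w) = normSq p • (star w * (p * w)) := by
    simp only [star_mul, star_star, ← mul_assoc, self_mul_star, coe_mul_eq_smul, smul_mul_assoc]
  rw [hconj, re_smul, re_mul_comm, mul_assoc, self_mul_star, mul_coe_eq_smul, re_smul,
    smul_eq_mul, smul_eq_mul]
  ring

theorem re_integral {X : Type*} [MeasurableSpace X] {μ : Measure X} {f : X → ℍ[ℝ]}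
    (hf : Integrable f μ) : (∫ x, f x ∂μ).re = ∫ x, (f x).re ∂μ :=
  let reCLM : ℍ[ℝ] →L[ℝ] ℝ := { QuaternionAlgebra.reₗ _ _ _ with cont := continuous_re }
  (reCLM.integral_comp_comm hf).symm

end Quaternion

section Correlation

variable {X : Type*} {p : ℍ[ℝ]} {u v : X → ℍ[ℝ]}

theorem norm_star_mul_eq_sq_of_conj (hp : ‖p‖ = 1) (hu : ∀ x, u x = star p * v x * p) (x : X) :
    ‖star (u x) * v x‖ = ‖v x‖ ^ 2 := by
  rw [hu x, norm_mul, norm_star, norm_mul, norm_mul, norm_star, hp]; ring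

variable [MeasurableSpace X] {μ : Measure X}

theorem integrable_star_mul_of_conj (hp : ‖p‖ = 1) (hv : MemLp v 2 μ)
    (hu : ∀ x, u x = star p * v x * p) : Integrable (fun x => star (u x) * v x) μ := by
  have hu_meas : AEStronglyMeasurable u μ := by
    rw [funext hu]
    exact (hv.aestronglyMeasurable.const_mul _).mul_const _
  refine ((memLp_two_iff_integrable_sq_norm hv.aestronglyMeasurable).mp hv).mono'
    ((continuous_star.comp_aestronglyMeasurable hu_meas).mul hv.aestronglyMeasurable) ?_
  exact Filter.Eventually.of_forall fun x => (norm_star_mul_eq_sq_of_conj hp hu x).le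

theorem norm_integral_star_mul_le_of_conj (hp : ‖p‖ = 1) (hu : ∀ x, u x = star p * v x * p) :
    ‖∫ x, star (u x) * v x ∂μ‖ ≤ ∫ x, ‖v x‖ ^ 2 ∂μ :=
  (norm_integral_le_integral_norm _).trans_eq
    (integral_congr_ae (Filter.Eventually.of_forall (norm_star_mul_eq_sq_of_conj hp hu)))

theorem re_mul_integral_star_mul_of_conj (hp : ‖p‖ = 1) (hv : MemLp v 2 μ)
    (hu : ∀ x, u x = star p * v x * p) :
    (p * ∫ x, star (u x) * v x ∂μ).re = p.re * ∫ x, ‖v x‖ ^ 2 ∂μ := by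
  have hpoint : ∀ x, (p * (star (u x) * v x)).re = p.re * ‖v x‖ ^ 2 := fun x => by
    rw [hu x, re_mul_star_conj_mul, normSq_eq_norm_mul_self, normSq_eq_norm_mul_self, hp]
    ring
  have hint := integrable_star_mul_of_conj hp hv hu
  rw [← integral_const_mul_of_integrable hint, re_integral (hint.const_mul p)]
  simp only [hpoint, integral_const_mul]

end Correlation

theorem le_cos_half_mul_add_sin_half_mul {c Y N φ : ℝ} (hc : 0 < c) (hN0 : 0 ≤ N) (hN1 : N ≤ 1)
    (hφ : φ ∈ Set.Icc 0 Real.pi) (h : c = N * (Real.cos φ * c + Real.sin φ * Y)) :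
    c ≤ Real.cos (φ / 2) * c + Real.sin (φ / 2) * Y := by
  set X := Real.cos (φ / 2) * c + Real.sin (φ / 2) * Y
  have hc2 : 0 ≤ Real.cos (φ / 2) :=
    Real.cos_nonneg_of_mem_Icc ⟨by linarith [hφ.1, Real.pi_pos], by linarith [hφ.2]⟩
  have hcos : Real.cos φ = 2 * Real.cos (φ / 2) ^ 2 - 1 := by
    rw [← Real.cos_two_mul, mul_div_cancel₀ _ two_ne_zero]
  have hsin : Real.sin φ = 2 * Real.sin (φ / 2) * Real.cos (φ / 2) := by
    rw [← Real.sin_two_mul, mul_div_cancel₀ _ two_ne_zero]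
  have hkey : 2 * N * (Real.cos (φ / 2) * X) = c * (1 + N) := by
    rw [hcos, hsin] at h; linear_combination -h
  have hN : 0 < N := hN0.lt_of_ne (by rintro rfl; linarith)
  have hc2X : c ≤ Real.cos (φ / 2) * X := by nlinarith
  have hX : 0 < X := by nlinarith [Real.cos_le_one (φ / 2)]
  nlinarith [Real.cos_le_one (φ / 2)]

theorem two_mul_arccos_le_of_cos_half_le {α x : ℝ} (hα : α ∈ Set.Icc 0 (2 * Real.pi))
    (h : Real.cos (α / 2) ≤ x) : 2 * Real.arccos x ≤ α := by
  have := Real.antitone_arccos h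
  rw [Real.arccos_cos (by linarith [hα.1]) (by linarith [hα.2])] at this
  linarith

theorem stmt_10_general {m : ℕ} (v u : EuclideanSpace ℝ (Fin m) → ℍ[ℝ])
    (hv_L2 : MemLp v 2 volume)
    (hv_norm : (∫ x, ‖v x‖ ^ 2) = 1)
    (P : ℍ[ℝ]) (hP_biv : P.re = 0) (hP_unit : ‖P‖ = 1)
    (α : ℝ) (hα : α ∈ Set.Ico 0 Real.pi)
    (hu : ∀ x, u x = star ((Real.cos (α / 2) : ℍ[ℝ]) + Real.sin (α / 2) • P) *
        v x * ((Real.cos (α / 2) : ℍ[ℝ]) + Real.sin (α / 2) • P))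
    (Cor : ℍ[ℝ]) (hCor : Cor = ∫ x, star (u x) * v x)
    (φ : ℝ) (hφ : φ ∈ Set.Icc 0 Real.pi)
    (Q : ℍ[ℝ])
    (hpolar : Cor = ‖Cor‖ • ((Real.cos φ : ℍ[ℝ]) + Real.sin φ • Q)) :
    2 * Real.arccos |((((Real.cos (α / 2) : ℍ[ℝ]) + Real.sin (α / 2) • P) *
        ((Real.cos (φ / 2) : ℍ[ℝ]) + Real.sin (φ / 2) • Q)).re)| ≤ α := by
  set p : ℍ[ℝ] := (Real.cos (α / 2) : ℍ[ℝ]) + Real.sin (α / 2) • P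
  have hp_re : p.re = Real.cos (α / 2) := by simp [p, hP_biv]
  have hp_norm : ‖p‖ = 1 := by
    have hsq : ‖p‖ * ‖p‖ = 1 := by
      rw [← normSq_eq_norm_mul_self, normSq_coe_add_smul _ _ hP_biv, normSq_eq_norm_mul_self,
        hP_unit, mul_one, mul_one, Real.cos_sq_add_sin_sq]
    nlinarith [norm_nonneg p]
  have hc : 0 < Real.cos (α / 2) :=
    Real.cos_pos_of_mem_Ioo ⟨by linarith [hα.1, Real.pi_pos], by linarith [hα.2]⟩
  have hCor_re : (p * Cor).re = Real.cos (α / 2) := by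
    rw [hCor, re_mul_integral_star_mul_of_conj hp_norm hv_L2 hu, hv_norm, hp_re, mul_one]
  have hCor_le : ‖Cor‖ ≤ 1 := hv_norm ▸ hCor ▸ norm_integral_star_mul_le_of_conj hp_norm hu
  have hpolar_re :
      Real.cos (α / 2) = ‖Cor‖ * (Real.cos φ * Real.cos (α / 2) + Real.sin φ * (p * Q).re) := by
    conv_lhs => rw [← hCor_re, hpolar, mul_smul_comm, re_smul, re_mul_coe_add_smul, hp_re]
    rfl
  refine two_mul_arccos_le_of_cos_half_le ⟨hα.1, by linarith [hα.2, Real.pi_pos]⟩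
    (le_trans ?_ (le_abs_self _))
  rw [re_mul_coe_add_smul, hp_re]
  exact le_cos_half_mul_add_sin_half_mul hc (norm_nonneg _) hCor_le hφ hpolar_re

/-- Lemma 2 of the paper, in the quaternion model of Cl(3,0): vectors of ℝ³
are imaginary quaternions, the rotor exp(αP/2) for a unit bivector P is the
unit quaternion cos(α/2) + sin(α/2)·P, the outer rotation is
R_{P,α}(v)(x) = exp(−αP/2) v(x) exp(αP/2) = star(p) v(x) p, and the geometric
cross correlation at the origin is (u ⋆ v)(0) = ∫ reverse(u(y)) v(y) dy, where
reversion on a vector is the identity and on the scalar-plus-bivector valued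
result corresponds to quaternion conjugation of the first factor.  If v is a
unit-L²-norm field, α ∈ [0,π), and the normalized correlation has polar form
cos φ + sin φ·Q with unit imaginary quaternion Q and φ ∈ [0,π], then the
composed rotor exp(αP/2)·exp(φQ/2) has rotation angle β = 2 arccos|⟨·⟩₀| ≤ α:
applying the correlation rotor does not increase the misalignment. -/
theorem stmt_10 {m : ℕ} (v u : EuclideanSpace ℝ (Fin m) → ℍ[ℝ])
    (hv_vec : ∀ x, (v x).re = 0)
    (hv_L2 : MemLp v 2 volume)
    (hv_norm : (∫ x, ‖v x‖ ^ 2) = 1)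
    (P : ℍ[ℝ]) (hP_biv : P.re = 0) (hP_unit : ‖P‖ = 1)
    (α : ℝ) (hα : α ∈ Set.Ico 0 Real.pi)
    (hu : ∀ x, u x = star ((Real.cos (α / 2) : ℍ[ℝ]) + Real.sin (α / 2) • P) *
        v x * ((Real.cos (α / 2) : ℍ[ℝ]) + Real.sin (α / 2) • P))
    (Cor : ℍ[ℝ]) (hCor : Cor = ∫ x, star (u x) * v x)
    (φ : ℝ) (hφ : φ ∈ Set.Icc 0 Real.pi)
    (Q : ℍ[ℝ]) (hQ_biv : Q.re = 0) (hQ_unit : ‖Q‖ = 1)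
    (hpolar : Cor = ‖Cor‖ • ((Real.cos φ : ℍ[ℝ]) + Real.sin φ • Q)) :
    2 * Real.arccos |((((Real.cos (α / 2) : ℍ[ℝ]) + Real.sin (α / 2) • P) *
        ((Real.cos (φ / 2) : ℍ[ℝ]) + Real.sin (φ / 2) • Q)).re)| ≤ α :=
  stmt_10_general v u hv_L2 hv_norm P hP_biv hP_unit α hα hu Cor hCor φ hφ Q hpolar
end

section
/- Under the hypotheses of the previous lemma (v ∈ L² with ‖v‖ = 1, outer rotation by α ∈ [0, π) in plane P, with the component v∥ of v in the plane P having nonzero L² norm), define β : [0, π) → [0, π) by β(α) = 2·arg(exp(αP/2)·exp(φ(α)Q(α)/2)), where exp(φQ) is the normalized geometric cross correlation of R_{P,α}(v) with v at the origin. Then the iteration α₀ = α, α_{n+1} = β(α_n) converges to 0. -/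
/-!
Pointwise, the correlation integrand has real part `‖v‖² - 2 sin² (α/2) ‖v∥‖²` and component
`-2 sin (α/2) cos (α/2) ‖v∥‖²` along `P`, and norm `‖v‖²`. So the correlation `N e^{φQ}` satisfies
`N ≤ 1` and `cos (α/2) (1 - N cos φ) = -sin (α/2) ⟪P, N sin φ Q⟫`, and with this relation the claim
`(e^{αP/2} e^{φQ/2}).re > cos (α/2)`, i.e. `β(α) < α`, becomes the elementary inequality
`N sin φ (1 - cos (φ/2)) < (1 - N cos φ) sin (φ/2)`. As `β(0) = 0` and `β` is continuous on
`(0, π)`, the decreasing sequence `αₙ` converges to a fixed point of `β`, which can only be `0`.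
-/

open MeasureTheory Quaternion Filter RealInnerProductSpace

/-- The rotor exp(aB/2) of Cl(3,0) in the quaternion model: for a unit
bivector (unit imaginary quaternion) B it is cos(a/2) + sin(a/2)·B. -/
noncomputable def rotorQ (B : ℍ[ℝ]) (a : ℝ) : ℍ[ℝ] :=
  (Real.cos (a / 2) : ℍ[ℝ]) + Real.sin (a / 2) • B

/-- The geometric cross correlation (R_{P,a}(v) ⋆ v)(0) = ∫ reverse(R_{P,a}(v)(x)) v(x) dx
of the outer-rotated copy R_{P,a}(v)(x) = exp(−aP/2) v(x) exp(aP/2) with v,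
in the quaternion model. -/
noncomputable def corQ {m : ℕ} (v : EuclideanSpace ℝ (Fin m) → ℍ[ℝ])
    (P : ℍ[ℝ]) (a : ℝ) : ℍ[ℝ] :=
  ∫ x, star (star (rotorQ P a) * v x * rotorQ P a) * v x

/-- The angle φ(a) of the polar form e^{φQ} of the normalized correlation. -/
noncomputable def phiQ {m : ℕ} (v : EuclideanSpace ℝ (Fin m) → ℍ[ℝ])
    (P : ℍ[ℝ]) (a : ℝ) : ℝ :=
  Real.arccos ((corQ v P a).re / ‖corQ v P a‖)

/-- The unit bivector Q(a) of the polar form e^{φQ} of the correlation. -/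
noncomputable def bivQ {m : ℕ} (v : EuclideanSpace ℝ (Fin m) → ℍ[ℝ])
    (P : ℍ[ℝ]) (a : ℝ) : ℍ[ℝ] :=
  ‖(corQ v P a).im‖⁻¹ • (corQ v P a).im

/-- β(a) = 2 arg(exp(aP/2) exp(φ(a)Q(a)/2)): the rotation angle of the
composed rotor, the remaining misalignment after applying the correlation
rotor. -/
noncomputable def betaQ {m : ℕ} (v : EuclideanSpace ℝ (Fin m) → ℍ[ℝ])
    (P : ℍ[ℝ]) (a : ℝ) : ℝ :=
  2 * Real.arccos |(rotorQ P a * rotorQ (bivQ v P a) (phiQ v P a)).re|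

open Real

lemma cos_half_pos {a : ℝ} (h₀ : -π < a) (h₁ : a < π) : 0 < cos (a / 2) :=
  cos_pos_of_mem_Ioo ⟨by linarith, by linarith⟩

lemma sin_half_pos {a : ℝ} (h₀ : 0 < a) (h₁ : a < 2 * π) : 0 < sin (a / 2) :=
  sin_pos_of_pos_of_lt_pi (by linarith) (by linarith)

lemma mul_sin_mul_one_sub_cos_half_lt {N θ : ℝ} (hN0 : 0 ≤ N) (hN1 : N ≤ 1) (hθ0 : 0 < θ)
    (hθπ : θ < π) : N * sin θ * (1 - cos (θ / 2)) < (1 - N * cos θ) * sin (θ / 2) := by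
  have hs : 0 < sin (θ / 2) := sin_half_pos hθ0 (by linarith)
  have hc : 0 < cos (θ / 2) := cos_half_pos (by linarith) hθπ
  have hc1 : cos (θ / 2) < 1 := by nlinarith [sin_sq_add_cos_sq (θ / 2)]
  have hθ : θ = 2 * (θ / 2) := by ring
  rw [hθ, sin_two_mul, cos_two_mul, ← hθ]
  have : 0 < (1 - cos (θ / 2)) * (1 + N) + cos (θ / 2) * (1 - N) := by
    nlinarith [mul_nonneg hc.le (sub_nonneg.mpr hN1)]
  nlinarith [mul_pos hs this]

namespace Quaternion

lemma sq_norm_eq_sum_sq (q : ℍ[ℝ]) : ‖q‖ ^ 2 = q.re ^ 2 + q.imI ^ 2 + q.imJ ^ 2 + q.imK ^ 2 := by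
  rw [sq, ← normSq_eq_norm_mul_self, normSq_def']

lemma inner_eq_sum_mul (p q : ℍ[ℝ]) :
    ⟪p, q⟫ = p.re * q.re + p.imI * q.imI + p.imJ * q.imJ + p.imK * q.imK := by
  simp only [inner_def, re_mul, re_star, imI_star, imJ_star, imK_star]
  ring

lemma sum_sq_im_eq_one {P : ℍ[ℝ]} (hP : P.re = 0) (hP1 : ‖P‖ = 1) :
    P.imI ^ 2 + P.imJ ^ 2 + P.imK ^ 2 = 1 := by
  have h := sq_norm_eq_sum_sq P
  rw [hP1, hP] at h
  linarith

lemma sq_norm_sub_inner_smul {P : ℍ[ℝ]} (hP1 : ‖P‖ = 1) (q : ℍ[ℝ]) :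
    ‖q - ⟪P, q⟫ • P‖ ^ 2 = ‖q‖ ^ 2 - ⟪P, q⟫ ^ 2 := by
  rw [norm_sub_sq_real, real_inner_smul_right, norm_smul, hP1, real_inner_comm, Real.norm_eq_abs]
  ring_nf; rw [sq_abs]; ring

lemma inner_eq_inner_im {P : ℍ[ℝ]} (hP : P.re = 0) (z : ℍ[ℝ]) : ⟪P, z.im⟫ = ⟪P, z⟫ := by
  simp only [inner_eq_sum_mul, re_im, imI_im, imJ_im, imK_im, hP]
  ring

lemma sq_norm_eq_sq_re_add_sq_norm_im (z : ℍ[ℝ]) : ‖z‖ ^ 2 = z.re ^ 2 + ‖z.im‖ ^ 2 := by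
  simp only [sq_norm_eq_sum_sq, re_im, imI_im, imJ_im, imK_im]
  ring

lemma re_le_norm (z : ℍ[ℝ]) : z.re ≤ ‖z‖ := by
  nlinarith [sq_norm_eq_sq_re_add_sq_norm_im z, norm_nonneg z, sq_nonneg ‖z.im‖]

lemma abs_re_lt_norm {z : ℍ[ℝ]} (hz : z.im ≠ 0) : |z.re| < ‖z‖ := by
  have hsq := sq_norm_eq_sq_re_add_sq_norm_im z
  have hM : 0 < ‖z.im‖ := norm_pos_iff.mpr hz
  exact abs_lt_of_sq_lt_sq (by nlinarith) (norm_nonneg z)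

lemma arccos_re_div_norm_mem_Ioo {z : ℍ[ℝ]} (hz : z.im ≠ 0) :
    arccos (z.re / ‖z‖) ∈ Set.Ioo 0 π := by
  have hN : 0 < ‖z‖ := (abs_nonneg _).trans_lt (abs_re_lt_norm hz)
  obtain ⟨h1, h2⟩ := abs_lt.mp (abs_re_lt_norm hz)
  exact ⟨arccos_pos.mpr ((div_lt_one hN).mpr h2),
    arccos_lt_pi.mpr ((lt_div_iff₀ hN).mpr (by linarith))⟩

lemma norm_mul_cos_arccos_re_div_norm {z : ℍ[ℝ]} (hz : z.im ≠ 0) :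
    ‖z‖ * cos (arccos (z.re / ‖z‖)) = z.re := by
  have hN : 0 < ‖z‖ := (abs_nonneg _).trans_lt (abs_re_lt_norm hz)
  obtain ⟨h1, h2⟩ := abs_lt.mp (abs_re_lt_norm hz)
  rw [cos_arccos ((le_div_iff₀ hN).mpr (by linarith)) ((div_le_one hN).mpr h2.le)]
  field_simp

lemma norm_mul_sin_arccos_re_div_norm {z : ℍ[ℝ]} (hz : z.im ≠ 0) :
    ‖z‖ * sin (arccos (z.re / ‖z‖)) = ‖z.im‖ := by
  have hN : 0 < ‖z‖ := (abs_nonneg _).trans_lt (abs_re_lt_norm hz)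
  have h : ‖z‖ ^ 2 * (1 - (z.re / ‖z‖) ^ 2) = ‖z.im‖ ^ 2 := by
    rw [mul_sub, mul_one, div_pow, mul_div_cancel₀ _ (pow_ne_zero 2 hN.ne'),
      sq_norm_eq_sq_re_add_sq_norm_im, add_sub_cancel_left]
  rw [sin_arccos, ← sqrt_sq (norm_nonneg z.im), ← h, sqrt_mul (sq_nonneg _), sqrt_sq hN.le]

end Quaternion

@[fun_prop]
lemma Continuous.rotorQ {X : Type*} [TopologicalSpace X] {f : X → ℍ[ℝ]} {g : X → ℝ}
    (hf : Continuous f) (hg : Continuous g) : Continuous fun x => rotorQ (f x) (g x) := by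
  unfold _root_.rotorQ
  have := Quaternion.continuous_coe
  fun_prop

lemma norm_rotorQ {B : ℍ[ℝ]} (hB : B.re = 0) (hB1 : ‖B‖ = 1) (a : ℝ) : ‖rotorQ B a‖ = 1 := by
  have hB2 := sum_sq_im_eq_one hB hB1
  have h : ‖rotorQ B a‖ ^ 2 = 1 := by
    simp only [sq_norm_eq_sum_sq, rotorQ, re_add, imI_add, imJ_add, imK_add, re_smul, imI_smul,
      imJ_smul, imK_smul, re_coe, imI_coe, imJ_coe, imK_coe, smul_eq_mul, hB]
    linear_combination sin (a / 2) ^ 2 * hB2 + sin_sq_add_cos_sq (a / 2)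
  exact (pow_eq_one_iff_of_nonneg (norm_nonneg _) two_ne_zero).mp h

lemma re_rotorQ_mul_rotorQ {P Q : ℍ[ℝ]} (hP : P.re = 0) (hQ : Q.re = 0) (a b : ℝ) :
    (rotorQ P a * rotorQ Q b).re
      = cos (a / 2) * cos (b / 2) - sin (a / 2) * sin (b / 2) * ⟪P, Q⟫ := by
  simp only [inner_eq_sum_mul, rotorQ, re_mul, re_add, imI_add, imJ_add, imK_add, re_smul,
    imI_smul, imJ_smul, imK_smul, re_coe, imI_coe, imJ_coe, imK_coe, smul_eq_mul, hP, hQ]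
  ring

lemma re_star_conj_rotorQ_mul_self {P q : ℍ[ℝ]} (hP : P.re = 0) (hP1 : ‖P‖ = 1) (hq : q.re = 0)
    (a : ℝ) : (star (star (rotorQ P a) * q * rotorQ P a) * q).re
      = ‖q‖ ^ 2 - 2 * sin (a / 2) ^ 2 * ‖q - ⟪P, q⟫ • P‖ ^ 2 := by
  have hP2 := sum_sq_im_eq_one hP hP1
  rw [sq_norm_sub_inner_smul hP1]
  simp only [inner_eq_sum_mul, sq_norm_eq_sum_sq, rotorQ, re_mul, imI_mul, imJ_mul, imK_mul,
    re_star, imI_star, imJ_star, imK_star, re_add, imI_add, imJ_add, imK_add, re_smul, imI_smul,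
    imJ_smul, imK_smul, re_coe, imI_coe, imJ_coe, imK_coe, smul_eq_mul, hP, hq]
  linear_combination (q.imI ^ 2 + q.imJ ^ 2 + q.imK ^ 2) * sin_sq_add_cos_sq (a / 2)
    - sin (a / 2) ^ 2 * (q.imI ^ 2 + q.imJ ^ 2 + q.imK ^ 2) * hP2

lemma inner_star_conj_rotorQ_mul_self {P q : ℍ[ℝ]} (hP : P.re = 0) (hP1 : ‖P‖ = 1)
    (hq : q.re = 0) (a : ℝ) : ⟪P, star (star (rotorQ P a) * q * rotorQ P a) * q⟫
      = -2 * cos (a / 2) * sin (a / 2) * ‖q - ⟪P, q⟫ • P‖ ^ 2 := by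
  have hP2 := sum_sq_im_eq_one hP hP1
  rw [sq_norm_sub_inner_smul hP1]
  simp only [inner_eq_sum_mul, sq_norm_eq_sum_sq, rotorQ, re_mul, imI_mul, imJ_mul, imK_mul,
    re_star, imI_star, imJ_star, imK_star, re_add, imI_add, imJ_add, imK_add, re_smul, imI_smul,
    imJ_smul, imK_smul, re_coe, imI_coe, imJ_coe, imK_coe, smul_eq_mul, hP, hq]
  linear_combination -2 * cos (a / 2) * sin (a / 2) * (q.imI ^ 2 + q.imJ ^ 2 + q.imK ^ 2) * hP2

lemma norm_star_conj_rotorQ_mul_self {P : ℍ[ℝ]} (hP : P.re = 0) (hP1 : ‖P‖ = 1) (q : ℍ[ℝ])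
    (a : ℝ) : ‖star (star (rotorQ P a) * q * rotorQ P a) * q‖ = ‖q‖ ^ 2 := by
  rw [norm_mul, norm_star, norm_mul, norm_mul, norm_star, norm_rotorQ hP hP1, sq]
  ring

lemma cos_half_lt_re_rotorQ_mul_rotorQ {P z : ℍ[ℝ]} (hP : P.re = 0) (hz1 : ‖z‖ ≤ 1)
    (hz : z.im ≠ 0) {a : ℝ} (hc : 0 < cos (a / 2))
    (h : cos (a / 2) * (1 - z.re) = -(sin (a / 2) * ⟪P, z⟫)) :
    cos (a / 2) < (rotorQ P a * rotorQ (‖z.im‖⁻¹ • z.im) (arccos (z.re / ‖z‖))).re := by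
  obtain ⟨hφ0, hφπ⟩ := arccos_re_div_norm_mem_Ioo hz
  have hM : 0 < ‖z.im‖ := norm_pos_iff.mpr hz
  have key := mul_sin_mul_one_sub_cos_half_lt (norm_nonneg z) hz1 hφ0 hφπ
  rw [norm_mul_sin_arccos_re_div_norm hz, norm_mul_cos_arccos_re_div_norm hz] at key
  rw [re_rotorQ_mul_rotorQ hP (by simp), real_inner_smul_right, inner_eq_inner_im hP]
  set φ := arccos (z.re / ‖z‖)
  have hlt : cos (a / 2) * (‖z.im‖ * (1 - cos (φ / 2)))
      < cos (a / 2) * ((1 - z.re) * sin (φ / 2)) := mul_lt_mul_of_pos_left key hc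
  rw [← mul_lt_mul_iff_of_pos_right hM]
  field_simp
  linear_combination hlt + sin (φ / 2) * h

/-- `‖v∥‖²` of the paper: `v x - ⟪P, v x⟫ • P` is the component of `v x` in the plane of the unit
bivector `P`, which in the quaternion model is the part orthogonal to `P`. -/
noncomputable def parallelNormSq {m : ℕ} (v : EuclideanSpace ℝ (Fin m) → ℍ[ℝ]) (P : ℍ[ℝ]) : ℝ :=
  ∫ x, ‖v x - ⟪P, v x⟫ • P‖ ^ 2

section Correlation

variable {m : ℕ} {v : EuclideanSpace ℝ (Fin m) → ℍ[ℝ]} {P : ℍ[ℝ]}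

lemma integrable_star_conj_rotorQ_mul_self (hv : MemLp v 2 volume) (hP : P.re = 0)
    (hP1 : ‖P‖ = 1) (a : ℝ) :
    Integrable (fun x => star (star (rotorQ P a) * v x * rotorQ P a) * v x) := by
  refine Integrable.mono' ((memLp_two_iff_integrable_sq_norm hv.1).mp hv) ?_ ?_
  · have : Continuous fun q : ℍ[ℝ] => star (star (rotorQ P a) * q * rotorQ P a) * q := by fun_prop
    exact this.comp_aestronglyMeasurable hv.1
  · exact .of_forall fun x => (norm_star_conj_rotorQ_mul_self hP hP1 (v x) a).le

lemma norm_corQ_le (hv1 : ∫ x, ‖v x‖ ^ 2 = 1) (hP : P.re = 0) (hP1 : ‖P‖ = 1) (a : ℝ) :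
    ‖corQ v P a‖ ≤ 1 :=
  calc ‖corQ v P a‖
      ≤ ∫ x, ‖star (star (rotorQ P a) * v x * rotorQ P a) * v x‖ := norm_integral_le_integral_norm _
    _ = 1 := by simp_rw [norm_star_conj_rotorQ_mul_self hP hP1, hv1]

lemma continuous_corQ (hv : MemLp v 2 volume) (hP : P.re = 0) (hP1 : ‖P‖ = 1) :
    Continuous (corQ v P) :=
  continuous_of_dominated (fun a => (integrable_star_conj_rotorQ_mul_self hv hP hP1 a).1)
    (fun a => .of_forall fun x => (norm_star_conj_rotorQ_mul_self hP hP1 (v x) a).le)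
    ((memLp_two_iff_integrable_sq_norm hv.1).mp hv) (.of_forall fun x => by fun_prop)

lemma re_corQ (hv_vec : ∀ x, (v x).re = 0) (hv : MemLp v 2 volume) (hv1 : ∫ x, ‖v x‖ ^ 2 = 1)
    (hP : P.re = 0) (hP1 : ‖P‖ = 1) (a : ℝ) :
    (corQ v P a).re = 1 - 2 * sin (a / 2) ^ 2 * parallelNormSq v P := by
  have hv2 : Integrable (fun x => ‖v x‖ ^ 2) := (memLp_two_iff_integrable_sq_norm hv.1).mp hv
  have hpar : Integrable (fun x => ‖v x - ⟪P, v x⟫ • P‖ ^ 2) := by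
    simp_rw [sq_norm_sub_inner_smul hP1]
    exact hv2.sub (hv.const_inner P).integrable_sq
  have hre (z : ℍ[ℝ]) : z.re = ⟪1, z⟫ := by simp [inner_def]
  rw [hre, corQ, ← integral_inner (integrable_star_conj_rotorQ_mul_self hv hP hP1 a)]
  simp_rw [← hre, re_star_conj_rotorQ_mul_self hP hP1 (hv_vec _)]
  rw [integral_sub hv2 (hpar.const_mul _), integral_const_mul, hv1, parallelNormSq]

lemma inner_corQ (hv_vec : ∀ x, (v x).re = 0) (hv : MemLp v 2 volume) (hP : P.re = 0)
    (hP1 : ‖P‖ = 1) (a : ℝ) :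
    ⟪P, corQ v P a⟫ = -2 * cos (a / 2) * sin (a / 2) * parallelNormSq v P := by
  rw [corQ, ← integral_inner (integrable_star_conj_rotorQ_mul_self hv hP hP1 a)]
  simp_rw [inner_star_conj_rotorQ_mul_self hP hP1 (hv_vec _)]
  rw [integral_const_mul, parallelNormSq]

lemma im_corQ_ne_zero (hv_vec : ∀ x, (v x).re = 0) (hv : MemLp v 2 volume) (hP : P.re = 0)
    (hP1 : ‖P‖ = 1) (hv_par : parallelNormSq v P ≠ 0) {a : ℝ} (ha : a ∈ Set.Ioo 0 π) :
    (corQ v P a).im ≠ 0 := by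
  intro h
  obtain ⟨ha₀, ha₁⟩ := ha
  have hc := cos_half_pos (by linarith [pi_pos]) ha₁
  have hs := sin_half_pos ha₀ (by linarith [pi_pos])
  have h0 := inner_corQ hv_vec hv hP hP1 a
  rw [← inner_eq_inner_im hP, h, inner_zero_right] at h0
  exact mul_ne_zero (by positivity) hv_par h0.symm

lemma continuousAt_betaQ (hv : MemLp v 2 volume) (hP : P.re = 0) (hP1 : ‖P‖ = 1) {a : ℝ}
    (ha : (corQ v P a).im ≠ 0) : ContinuousAt (betaQ v P) a := by
  have hcor : ContinuousAt (corQ v P) a := (continuous_corQ hv hP hP1).continuousAt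
  have hM : ‖(corQ v P a).im‖ ≠ 0 := norm_ne_zero_iff.mpr ha
  have hN : ‖corQ v P a‖ ≠ 0 := norm_ne_zero_iff.mpr fun h => ha (by rw [h, im_zero])
  have := Quaternion.continuous_re
  have := Quaternion.continuous_im
  unfold betaQ phiQ bivQ
  fun_prop (disch := assumption)

lemma betaQ_nonneg (a : ℝ) : 0 ≤ betaQ v P a :=
  mul_nonneg zero_le_two (arccos_nonneg _)

lemma betaQ_lt (hv_vec : ∀ x, (v x).re = 0) (hv : MemLp v 2 volume) (hv1 : ∫ x, ‖v x‖ ^ 2 = 1)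
    (hP : P.re = 0) (hP1 : ‖P‖ = 1) (hv_par : parallelNormSq v P ≠ 0) {a : ℝ}
    (ha : a ∈ Set.Ioo 0 π) : betaQ v P a < a := by
  have hc := cos_half_pos (by linarith [ha.1, pi_pos]) ha.2
  have hX : cos (a / 2) < (rotorQ P a * rotorQ (bivQ v P a) (phiQ v P a)).re :=
    cos_half_lt_re_rotorQ_mul_rotorQ hP (norm_corQ_le hv1 hP hP1 a)
      (im_corQ_ne_zero hv_vec hv hP hP1 hv_par ha) hc
      (by rw [re_corQ hv_vec hv hv1 hP hP1, inner_corQ hv_vec hv hP hP1]; ring)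
  set X := (rotorQ P a * rotorQ (bivQ v P a) (phiQ v P a)).re
  have hlt : arccos |X| < a / 2 := by
    rcases le_or_gt |X| 1 with hX1 | hX1
    · calc arccos |X| < arccos (cos (a / 2)) :=
            arccos_lt_arccos (by linarith) (hX.trans_le (le_abs_self X)) hX1
        _ = a / 2 := arccos_cos (by linarith [ha.1]) (by linarith [ha.2, pi_pos])
    · rw [arccos_of_one_le hX1.le]; linarith [ha.1]
  rw [betaQ]
  linarith

lemma betaQ_zero (hv_vec : ∀ x, (v x).re = 0) (hv : MemLp v 2 volume)
    (hv1 : ∫ x, ‖v x‖ ^ 2 = 1) (hP : P.re = 0) (hP1 : ‖P‖ = 1) : betaQ v P 0 = 0 := by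
  have hre : (corQ v P 0).re = 1 := by simp [re_corQ hv_vec hv hv1 hP hP1]
  have hnorm : ‖corQ v P 0‖ = 1 :=
    le_antisymm (norm_corQ_le hv1 hP hP1 0) (hre ▸ re_le_norm _)
  have hrotor (B : ℍ[ℝ]) : rotorQ B 0 = 1 := by simp [rotorQ]
  simp [betaQ, phiQ, hre, hnorm, hrotor]

end Correlation

open Set in
lemma tendsto_zero_of_recurrence {f : ℝ → ℝ} {b : ℝ} {u : ℕ → ℝ} (hf₀ : f 0 = 0)
    (hf_mem : ∀ x ∈ Ioo 0 b, f x ∈ Ico 0 x) (hf_cont : ∀ x ∈ Ioo 0 b, ContinuousAt f x)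
    (hu₀ : u 0 ∈ Ico 0 b) (hu : ∀ n, u (n + 1) = f (u n)) : Tendsto u atTop (nhds 0) := by
  have hf_Ico (x : ℝ) (hx : x ∈ Ico 0 b) : f x ∈ Icc 0 x := by
    rcases hx.1.eq_or_lt with rfl | hx₀
    · simp [hf₀]
    · exact Ico_subset_Icc_self (hf_mem x ⟨hx₀, hx.2⟩)
  have hmem (n : ℕ) : u n ∈ Ico 0 b := by
    induction n with
    | zero => exact hu₀
    | succ n ih =>
      rw [hu]
      exact ⟨(hf_Ico _ ih).1, (hf_Ico _ ih).2.trans_lt ih.2⟩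
  have hanti : Antitone u := antitone_nat_of_succ_le fun n => hu n ▸ (hf_Ico _ (hmem n)).2
  have hbdd : BddBelow (range u) := ⟨0, forall_mem_range.mpr fun n => (hmem n).1⟩
  have hlim := tendsto_atTop_ciInf hanti hbdd
  set L := ⨅ n, u n
  have hL₀ : 0 ≤ L := le_ciInf fun n => (hmem n).1
  have hLb : L < b := (ciInf_le hbdd 0).trans_lt (hmem 0).2
  rcases hL₀.eq_or_lt with hL | hL
  · rwa [← hL] at hlim
  have hiter : u = fun n => f^[n] (u 0) := by
    funext n
    induction n with
    | zero => rfl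
    | succ n ih => rw [hu, ih, Function.iterate_succ_apply']
  rw [hiter] at hlim
  have hfix := isFixedPt_of_tendsto_iterate hlim (hf_cont L ⟨hL, hLb⟩)
  exact absurd hfix (hf_mem L ⟨hL, hLb⟩).2.ne

/-- Theorem 3 of the paper: for a square-integrable vector field v of unit L²
norm whose component parallel to the plane of the unit bivector P has nonzero
L² norm, the iteration α₀ = α, α_{n+1} = β(α_n) of remaining misalignment
angles under iterative geometric correlation converges to 0, for every
α ∈ [0,π). -/
theorem stmt_11 {m : ℕ} (v : EuclideanSpace ℝ (Fin m) → ℍ[ℝ])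
    (hv_vec : ∀ x, (v x).re = 0)
    (hv_L2 : MemLp v 2 volume)
    (hv_norm : (∫ x, ‖v x‖ ^ 2) = 1)
    (P : ℍ[ℝ]) (hP_biv : P.re = 0) (hP_unit : ‖P‖ = 1)
    (hv_par : (∫ x, ‖v x - ⟪P, v x⟫ • P‖ ^ 2) ≠ 0)
    (α : ℝ) (hα : α ∈ Set.Ico 0 Real.pi)
    (seq : ℕ → ℝ) (hseq0 : seq 0 = α)
    (hseqS : ∀ n, seq (n + 1) = betaQ v P (seq n)) :
    Tendsto seq atTop (nhds 0) :=
  tendsto_zero_of_recurrence (betaQ_zero hv_vec hv_L2 hv_norm hP_biv hP_unit)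
    (fun _ ha => ⟨betaQ_nonneg _, betaQ_lt hv_vec hv_L2 hv_norm hP_biv hP_unit hv_par ha⟩)
    (fun _ ha => continuousAt_betaQ hv_L2 hP_biv hP_unit
      (im_corQ_ne_zero hv_vec hv_L2 hP_biv hP_unit hv_par ha))
    (hseq0 ▸ hα) hseqS
end
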